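/- arXiv:2510.07298 — 3 statements merged into one kernel-verified Lean document; each statement's English description precedes it below -/
import Mathlib

section
/- Let V be an affine subspace of F_2^n of dimension k, and let B_d = {x ∈ F_2^n : |x|_H ≤ d} be the Hamming ball of radius d. Then |V ∩ B_d| ≤ ∑_{a=0}^{d} binom(k, a). -/
/-!
A `k`-dimensional subspace `W` of `F_2^n` has an information set: a set `S` of at most `k`
coordinates on which no nonzero vector of `W` vanishes. Hence a point of `v + W` is determined by
its restriction to `S`, and over `F_2` that restriction is determined by its support. A point of
Hamming weight at most `d` has support in `S` of size at most `d`, so there are at most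
`∑_{a ≤ d} C(|S|, a) ≤ ∑_{a ≤ d} C(k, a)` such points.
-/

open Finset

/-- The coordinate functionals span the dual of `W`; a basis of the dual chosen among them is
indexed by the required `S`. -/
theorem Submodule.exists_finset_card_le_finrank_forall_eq_zero {K ι : Type*} [Field K]
    [Fintype ι] (W : Submodule K (ι → K)) :
    ∃ S : Finset ι, #S ≤ Module.finrank K W ∧ ∀ x ∈ W, (∀ i ∈ S, x i = 0) → x = 0 := by
  classical
  let φ : ι → Module.Dual K W := fun i ↦ LinearMap.proj i ∘ₗ W.subtype
  obtain ⟨b, -, -, hspan, hli⟩ :=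
    exists_linearIndepOn_extension (linearIndepOn_empty K φ) (Set.empty_subset Set.univ)
  refine ⟨b.toFinset, ?_, fun x hx hb ↦ funext fun i ↦ ?_⟩
  · rw [Set.toFinset_card, ← Subspace.dual_finrank_eq]
    exact hli.fintype_card_le_finrank
  · have : Submodule.span K (φ '' b) ≤ LinearMap.ker (Module.Dual.eval K W ⟨x, hx⟩) := by
      rw [Submodule.span_le]
      rintro _ ⟨j, hj, rfl⟩
      exact hb j (Set.mem_toFinset.mpr hj)
    exact this (hspan ⟨i, Set.mem_univ i, rfl⟩)

theorem Finset.card_filter_card_le_powerset {α : Type*} (s : Finset α) (d : ℕ) :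
    #{t ∈ s.powerset | #t ≤ d} = ∑ a ∈ range (d + 1), (#s).choose a := by
  rw [card_eq_sum_card_fiberwise (f := card) (t := range (d + 1))
    fun t ht ↦ mem_range.mpr (Nat.lt_succ_of_le (mem_filter.mp ht).2)]
  refine sum_congr rfl fun a ha ↦ ?_
  rw [← card_powersetCard, powersetCard_eq_filter, filter_filter]
  exact congrArg card <| filter_congr fun t _ ↦
    ⟨And.right, fun h ↦ ⟨h ▸ Nat.le_of_lt_succ (mem_range.mp ha), h⟩⟩

theorem ZMod.two_eq_iff_ne_zero_iff {a b : ZMod 2} : a = b ↔ (a ≠ 0 ↔ b ≠ 0) := by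
  revert a b; decide

/-- An affine subspace of dimension `k` of `F_2^n` meets the Hamming ball of radius `d`
in at most `∑_{a=0}^d C(k,a)` points. -/
theorem stmt2 (n k d : ℕ) (W : Submodule (ZMod 2) (Fin n → ZMod 2))
    (hW : Module.finrank (ZMod 2) W = k) (v : Fin n → ZMod 2) :
    Nat.card {x : Fin n → ZMod 2 | (∃ w ∈ W, x = v + w) ∧ hammingNorm x ≤ d} ≤
      ∑ a ∈ Finset.range (d + 1), Nat.choose k a := by
  classical
  obtain ⟨S, hSk, hS⟩ := W.exists_finset_card_le_finrank_forall_eq_zero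
  set V := {x : Fin n → ZMod 2 | (∃ w ∈ W, x = v + w) ∧ hammingNorm x ≤ d}
  let supp : (Fin n → ZMod 2) → Finset (Fin n) := fun x ↦ {i ∈ S | x i ≠ 0}
  have h_maps : ∀ x ∈ V, supp x ∈ ({T ∈ S.powerset | #T ≤ d} : Finset _) := fun x hx ↦
    mem_filter.mpr ⟨mem_powerset.mpr (filter_subset _ _),
      (card_le_card (filter_subset_filter _ (subset_univ S))).trans hx.2⟩
  have h_inj : Set.InjOn supp V := by
    rintro _ ⟨⟨w, hw, rfl⟩, -⟩ _ ⟨⟨w', hw', rfl⟩, -⟩ h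
    suffices w - w' = 0 by rw [sub_eq_zero.mp this]
    refine hS _ (sub_mem hw hw') fun i hi ↦ sub_eq_zero.mpr (add_left_cancel (a := v i) ?_)
    rw [ZMod.two_eq_iff_ne_zero_iff]
    simpa [supp, hi] using Finset.ext_iff.mp h i
  calc Nat.card V = V.ncard := Nat.card_coe_set_eq V
    _ ≤ (↑({T ∈ S.powerset | #T ≤ d} : Finset _) : Set _).ncard :=
      Set.ncard_le_ncard_of_injOn supp h_maps h_inj (finite_toSet _)
    _ = ∑ a ∈ range (d + 1), (#S).choose a := by
      rw [Set.ncard_coe_finset, card_filter_card_le_powerset]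
    _ ≤ ∑ a ∈ range (d + 1), k.choose a := sum_le_sum fun a _ ↦ Nat.choose_le_choose a (hW ▸ hSk)
end

section
/- Let n ≥ 1 and k ∈ {1,…,n}, and define b_i = 2·|i|_H for i ∈ F_2^n. Then for every affine subspace D ⊆ F_2^n of dimension k, ∑_{i ∈ D} b_i ≥ k·2^k. -/
set_option maxHeartbeats 1000000 in
/-- The weights `b(i) = 2·|i|_H` satisfy: for every affine subspace `D` of `F_2^n` of
dimension `k ∈ {1,…,n}`, `∑_{i∈D} b(i) ≥ k·2^k`. -/
theorem stmt7 (n k : ℕ) (hn : 1 ≤ n) (hk1 : 1 ≤ k) (hkn : k ≤ n)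
    (W : Submodule (ZMod 2) (Fin n → ZMod 2)) (hW : Module.finrank (ZMod 2) W = k)
    (v : Fin n → ZMod 2) :
    k * 2 ^ k ≤ (Set.toFinite {x : Fin n → ZMod 2 | ∃ w ∈ W, x = v + w}).toFinset.sum
      (fun i => 2 * hammingNorm i) := by
  classical
  set D := (Set.toFinite {x : Fin n → ZMod 2 | ∃ w ∈ W, x = v + w}).toFinset with hD
  have hmemD : ∀ x, x ∈ D ↔ ∃ w ∈ W, x = v + w := by
    intro x; simp [hD]
  set WF := (Set.toFinite (W : Set (Fin n → ZMod 2))).toFinset with hWF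
  have hDimage : D = WF.image (fun w => v + w) := by
    ext x
    simp only [hmemD, Finset.mem_image, hWF, Set.Finite.mem_toFinset, SetLike.mem_coe]
    constructor
    · rintro ⟨w, hw, rfl⟩; exact ⟨w, hw, rfl⟩
    · rintro ⟨w, hw, rfl⟩; exact ⟨w, hw, rfl⟩
  have hcardW : WF.card = 2 ^ k := by
    have h1 := Module.card_eq_pow_finrank (K := ZMod 2) (V := W)
    rw [ZMod.card, hW] at h1
    rw [hWF, ← Set.ncard_eq_toFinset_card _, ← Nat.card_coe_set_eq, ← h1,
      Fintype.card_eq_nat_card]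
    exact Nat.card_congr (Equiv.refl _)
  have hcardD : D.card = 2 ^ k := by
    rw [hDimage, Finset.card_image_of_injective _ (add_right_injective v), hcardW]
  -- the set of coordinates where W is not identically zero
  set S := Finset.univ.filter (fun j : Fin n => ∃ w ∈ W, (w : Fin n → ZMod 2) j ≠ 0) with hS
  -- |S| ≥ k via injectivity of the restriction map
  have hScard : k ≤ S.card := by
    let φ : W →ₗ[ZMod 2] ({j // j ∈ S} → ZMod 2) :=
      { toFun := fun w j => (w : Fin n → ZMod 2) j.1
        map_add' := fun a b => rfl
        map_smul' := fun c a => rfl }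
    have hinj : Function.Injective φ := by
      intro a b hab
      ext j
      by_cases hj : j ∈ S
      · exact congrFun hab ⟨j, hj⟩
      · simp only [hS, Finset.mem_filter, Finset.mem_univ, true_and, not_exists] at hj
        push_neg at hj
        have ha := hj a a.2
        have hb := hj b b.2
        simp only [ha, hb]
    have := LinearMap.finrank_le_finrank_of_injective hinj
    rwa [hW, Module.finrank_fintype_fun_eq_card, Fintype.card_coe] at this
  -- for j ∈ S, exactly half the elements of D have nonzero j-th coordinate
  have hhalf : ∀ j ∈ S, (D.filter (fun x => x j ≠ 0)).card = 2 ^ (k - 1) := by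
    intro j hj
    simp only [hS, Finset.mem_filter, Finset.mem_univ, true_and] at hj
    obtain ⟨w0, hw0W, hw0⟩ := hj
    have hw0' : w0 j = 1 := by
      rcases (by decide : ∀ a : ZMod 2, a = 0 ∨ a = 1) (w0 j) with h | h
      · exact absurd h hw0
      · exact h
    have hww : w0 + w0 = 0 := by
      ext j'; simp [CharTwo.add_self_eq_zero]
    have hbij : (D.filter (fun x => x j ≠ 0)).card = (D.filter (fun x => x j = 0)).card := by
      apply Finset.card_bij (fun x _ => x + w0)
      · intro x hx
        simp only [Finset.mem_filter] at hx ⊢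
        obtain ⟨hxD, hxj⟩ := hx
        obtain ⟨w, hwW, rfl⟩ := (hmemD x).1 hxD
        constructor
        · exact (hmemD _).2 ⟨w + w0, W.add_mem hwW hw0W, by ring⟩
        · have : (v + w) j = 1 := by
            rcases (by decide : ∀ a : ZMod 2, a = 0 ∨ a = 1) ((v + w) j) with h | h
            · exact absurd h hxj
            · exact h
          simp only [Pi.add_apply] at this ⊢
          rw [this, hw0']
          decide
      · intro a ha b hb hab
        have := congrArg (fun y => y + w0) hab
        simpa [add_assoc, hww] using this
      · intro x hx
        refine ⟨x + w0, ?_, ?_⟩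
        · simp only [Finset.mem_filter] at hx ⊢
          obtain ⟨hxD, hxj⟩ := hx
          obtain ⟨w, hwW, rfl⟩ := (hmemD x).1 hxD
          refine ⟨(hmemD _).2 ⟨w + w0, W.add_mem hwW hw0W, by ring⟩, ?_⟩
          simp only [Pi.add_apply] at hxj ⊢
          rw [hxj] at *
          simp [hw0']
        · simp [add_assoc, hww]
    have hsplit : (D.filter (fun x => x j ≠ 0)).card + (D.filter (fun x => x j = 0)).card
        = 2 ^ k := by
      have h2 := Finset.card_filter_add_card_filter_not (s := D)
        (p := fun x => x j ≠ 0)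
      simp only [not_not] at h2
      rw [h2, hcardD]
    rw [← hbij, ← two_mul] at hsplit
    have h3 : 2 ^ k = 2 * 2 ^ (k - 1) := by
      rw [← pow_succ', Nat.sub_add_cancel hk1]
    rw [h3] at hsplit
    exact Nat.eq_of_mul_eq_mul_left two_pos hsplit
  -- main computation
  have hsum : ∑ i ∈ D, hammingNorm i
      = ∑ j : Fin n, (D.filter (fun x => x j ≠ 0)).card := by
    have h1 : ∀ i ∈ D, hammingNorm i
        = ∑ j : Fin n, if i j ≠ 0 then 1 else 0 := by
      intro i _
      rw [hammingNorm, Finset.card_filter]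
    rw [Finset.sum_congr rfl h1, Finset.sum_comm]
    exact Finset.sum_congr rfl fun j _ => (Finset.card_filter _ _).symm
  have hge : k * 2 ^ (k - 1) ≤ ∑ i ∈ D, hammingNorm i := by
    rw [hsum]
    calc k * 2 ^ (k - 1) ≤ S.card * 2 ^ (k - 1) := by
          exact Nat.mul_le_mul_right _ hScard
      _ = ∑ j ∈ S, (D.filter (fun x => x j ≠ 0)).card := by
          rw [Finset.sum_congr rfl hhalf, Finset.sum_const, smul_eq_mul]
      _ ≤ ∑ j : Fin n, (D.filter (fun x => x j ≠ 0)).card :=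
          Finset.sum_le_sum_of_subset (Finset.subset_univ S)
  calc k * 2 ^ k = 2 * (k * 2 ^ (k - 1)) := by
        rw [← mul_assoc, mul_comm 2 k, mul_assoc, ← pow_succ', Nat.sub_add_cancel hk1]
    _ ≤ 2 * ∑ i ∈ D, hammingNorm i := Nat.mul_le_mul_left 2 hge
    _ = ∑ i ∈ D, 2 * hammingNorm i := by rw [Finset.mul_sum]
end

section
/- Let U ⊆ F_2^n be a set that intersects every affine subspace of dimension τ (a τ-universal set), let τ ≤ k ≤ n, let G ∈ F_2^{(n−k)×n} be a full-rank matrix and s ∈ F_2^{n−k}. Then |{y ∈ U : G·y = s}| ≥ 2^{k−τ}. -/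
/-!
The fiber `{y | G y = s}` is a coset `y₀ + ker G` of a `k`-dimensional space. Split `ker G` as
`W ⊕ C` with `dim W = τ`. Universality puts a point of `U` in every coset `y₀ + c + W`, and these
cosets are pairwise disjoint for distinct `c ∈ C`, so the fiber meets `U` in at least
`|C| = 2^(k-τ)` points.
-/

open Module

def IsAffineUniversal (K : Type*) {V : Type*} [Ring K] [AddCommGroup V] [Module K V]
    (τ : ℕ) (U : Set V) : Prop :=
  ∀ W : Submodule K V, finrank K W = τ → ∀ v : V, ∃ x ∈ U, ∃ w ∈ W, x = v + w

theorem Submodule.exists_le_finrank_eq {K V : Type*} [DivisionRing K] [AddCommGroup V]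
    [Module K V] (E : Submodule K V) [FiniteDimensional K E] {τ : ℕ} (hτ : τ ≤ finrank K E) :
    ∃ W ≤ E, finrank K W = τ := by
  let b := Module.finBasis K E
  let v : Fin τ → V := fun i => b (Fin.castLE hτ i)
  have hv : LinearIndependent K v :=
    (b.linearIndependent.map' E.subtype E.ker_subtype).comp _ (Fin.castLE_injective hτ)
  refine ⟨Submodule.span K (Set.range v), ?_, by simp [finrank_span_eq_card hv]⟩
  rw [Submodule.span_le]
  rintro _ ⟨i, rfl⟩
  exact (b _).2

theorem card_le_card_inter_fiber_of_disjoint {R V V' : Type*} [Ring R] [AddCommGroup V]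
    [Module R V] [AddCommGroup V'] [Module R V'] [Finite V] {f : V →ₗ[R] V'}
    {W C : Submodule R V} (hWC : Disjoint W C) (hW : W ≤ LinearMap.ker f)
    (hC : C ≤ LinearMap.ker f) {U : Set V} (hU : ∀ v : V, ∃ x ∈ U, ∃ w ∈ W, x = v + w)
    (y₀ : V) :
    Nat.card C ≤ Nat.card {y | y ∈ U ∧ f y = f y₀} := by
  choose x hxU w hwW hxw using fun c : C => hU (y₀ + c)
  have hfx (c : C) : f (x c) = f y₀ := by
    simp [hxw, LinearMap.mem_ker.mp (hC c.2), LinearMap.mem_ker.mp (hW (hwW c))]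
  refine Nat.card_le_card_of_injective (fun c => ⟨x c, hxU c, hfx c⟩) fun c c' h => ?_
  have hcc' : (c : V) - c' = w c' - w c := by
    have hx : y₀ + c + w c = y₀ + c' + w c' := by
      simpa only [← hxw] using congrArg Subtype.val h
    calc (c : V) - c' = (y₀ + c + w c) - (y₀ + c' + w c') + (w c' - w c) := by abel
      _ = w c' - w c := by rw [hx, sub_self, zero_add]
  have := Submodule.disjoint_def.mp hWC _ (hcc' ▸ sub_mem (hwW c') (hwW c)) (sub_mem c.2 c'.2)
  exact Subtype.ext (sub_eq_zero.mp this)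

theorem IsAffineUniversal.pow_le_card_inter_fiber {K V V' : Type*} [Field K] [AddCommGroup V]
    [Module K V] [AddCommGroup V'] [Module K V'] [Finite V] {τ : ℕ} {U : Set V}
    (hU : IsAffineUniversal K τ U) (f : V →ₗ[K] V') (hτ : τ ≤ finrank K (LinearMap.ker f))
    (y₀ : V) :
    Nat.card K ^ (finrank K (LinearMap.ker f) - τ) ≤ Nat.card {y | y ∈ U ∧ f y = f y₀} := by
  obtain ⟨W, hW, hWτ⟩ := (LinearMap.ker f).exists_le_finrank_eq hτ
  obtain ⟨C, hWC, hWC_sup⟩ := IsModularLattice.exists_disjoint_and_sup_eq hW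
  have hCrank : finrank K C = finrank K (LinearMap.ker f) - τ := by
    have := Submodule.finrank_sup_add_finrank_inf_eq W C
    rw [hWC_sup, hWC.eq_bot, finrank_bot] at this
    omega
  calc Nat.card K ^ (finrank K (LinearMap.ker f) - τ) = Nat.card C := by
        rw [Module.natCard_eq_pow_finrank (K := K) (V := C), hCrank]
    _ ≤ _ := card_le_card_inter_fiber_of_disjoint hWC hW (hWC_sup ▸ le_sup_right) (hU W hWτ) y₀

/-- If `U` is `τ`-universal (meets every affine subspace of dimension `τ`), `τ ≤ k ≤ n`,
`G` is a full-rank `(n-k) × n` matrix and `s` a syndrome, then the fiber `{y ∈ U : Gy = s}`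
has at least `2^{k-τ}` elements. -/
theorem stmt16 (n k τ : ℕ) (hτk : τ ≤ k) (hkn : k ≤ n) (U : Set (Fin n → ZMod 2))
    (hU : ∀ W : Submodule (ZMod 2) (Fin n → ZMod 2), Module.finrank (ZMod 2) W = τ →
      ∀ v : Fin n → ZMod 2, ∃ x ∈ U, ∃ w ∈ W, x = v + w)
    (G : Matrix (Fin (n - k)) (Fin n) (ZMod 2)) (hG : G.rank = n - k)
    (s : Fin (n - k) → ZMod 2) :
    2 ^ (k - τ) ≤ Nat.card {y : Fin n → ZMod 2 | y ∈ U ∧ G.mulVec y = s} := by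
  have hsurj : Function.Surjective G.mulVecLin := by
    refine LinearMap.range_eq_top.mp (Submodule.eq_top_of_finrank_eq ?_)
    rw [← Matrix.rank, hG, finrank_fin_fun]
  have hker : finrank (ZMod 2) (LinearMap.ker G.mulVecLin) = k := by
    have := LinearMap.finrank_range_add_finrank_ker G.mulVecLin
    rw [← Matrix.rank, hG, finrank_fin_fun] at this
    omega
  obtain ⟨y₀, rfl⟩ := hsurj s
  have hτ : τ ≤ finrank (ZMod 2) (LinearMap.ker G.mulVecLin) := hker.symm ▸ hτk
  simpa [hker] using IsAffineUniversal.pow_le_card_inter_fiber hU G.mulVecLin hτ y₀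
end
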